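/- arXiv:math/0204300 — 2 statements merged into one kernel-verified Lean document; each statement's English description precedes it below -/
import Mathlib

section
/- Let L : Λ → ℂ be a hermitian linear functional and let (f_n)_{n≥0} be a sequence of right orthogonal Laurent polynomials with respect to L, with ℓ_n := (f_n, f_n)_L. Then there exist complex numbers π_{n,k}, defined for n, k ≥ 0 with |n − k| ≤ 2, such that for every n ≥ 0 (with the convention f_k = 0 and f_{k*} = 0 for k < 0): z·f_n(z) = Σ_{k=n−2}^{n+2} π_{n,k} f_k(z) and z·f_{n*}(z) = Σ_{k=n−2}^{n+2} (ℓ_n/ℓ_k) π_{k,n} f_{k*}(z) (sums over those k ≥ 0), i.e. the right and left orthogonal Laurent polynomials satisfy a five-term recurrence relation. -/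
open LaurentPolynomial Polynomial Complex ComplexConjugate

noncomputable section

/-- Substar conjugate of a Laurent polynomial: f_*(z) = Σ conj(c_k) z^{-k}. -/
def substar (f : LaurentPolynomial ℂ) : LaurentPolynomial ℂ :=
  AddMonoidAlgebra.ofCoeff
    (Finsupp.mapRange (starRingEnd ℂ) (map_zero _) (LaurentPolynomial.invert f).coeff)

/-- Hermitian linear functional on Laurent polynomials. -/
def IsHermitianL (L : LaurentPolynomial ℂ →ₗ[ℂ] ℂ) : Prop :=
  ∀ n : ℕ, L (T (-(n : ℤ))) = conj (L (T (n : ℤ)))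

/-- The sesquilinear form induced by `L`: (f,g)_L := L (f g_*). -/
def sesq (L : LaurentPolynomial ℂ →ₗ[ℂ] ℂ) (f g : LaurentPolynomial ℂ) : ℂ :=
  L (f * substar g)

/-- Λ_{m,n} = span {z^m, …, z^n}. -/
def lamBox (m n : ℤ) : Submodule ℂ (LaurentPolynomial ℂ) :=
  Submodule.span ℂ ((fun k : ℤ => (T k : LaurentPolynomial ℂ)) '' Set.Icc m n)

/-- Λ_n^+  (Λ_{2n}^+ = Λ_{-n,n}, Λ_{2n+1}^+ = Λ_{-n,n+1}). -/
def lamPlus (n : ℕ) : Submodule ℂ (LaurentPolynomial ℂ) :=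
  lamBox (-((n / 2 : ℕ) : ℤ)) (((n + 1) / 2 : ℕ) : ℤ)

/-- Λ_n^-  (Λ_{2n}^- = Λ_{-n,n}, Λ_{2n+1}^- = Λ_{-n-1,n}). -/
def lamMinus (n : ℕ) : Submodule ℂ (LaurentPolynomial ℂ) :=
  lamBox (-(((n + 1) / 2 : ℕ) : ℤ)) ((n / 2 : ℕ) : ℤ)

/-- (f_n) is a sequence of right orthogonal Laurent polynomials w.r.t. L. -/
def IsRightOLP (L : LaurentPolynomial ℂ →ₗ[ℂ] ℂ) (f : ℕ → LaurentPolynomial ℂ) : Prop :=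
  (∀ n, f n ∈ lamPlus n) ∧ f 0 ≠ 0 ∧ (∀ n, f (n + 1) ∉ lamPlus n) ∧
    (∀ n m, n ≠ m → sesq L (f n) (f m) = 0) ∧ (∀ n, sesq L (f n) (f n) ≠ 0)

/-- (f_n) is a sequence of left orthogonal Laurent polynomials w.r.t. L. -/
def IsLeftOLP (L : LaurentPolynomial ℂ →ₗ[ℂ] ℂ) (f : ℕ → LaurentPolynomial ℂ) : Prop :=
  (∀ n, f n ∈ lamMinus n) ∧ f 0 ≠ 0 ∧ (∀ n, f (n + 1) ∉ lamMinus n) ∧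
    (∀ n m, n ≠ m → sesq L (f n) (f m) = 0) ∧ (∀ n, sesq L (f n) (f n) ≠ 0)

/-- Right orthonormal Laurent polynomials. -/
def IsRightOnLP (L : LaurentPolynomial ℂ →ₗ[ℂ] ℂ) (f : ℕ → LaurentPolynomial ℂ) : Prop :=
  IsRightOLP L f ∧ ∀ n, sesq L (f n) (f n) = 1 ∨ sesq L (f n) (f n) = -1

/-- Left orthonormal Laurent polynomials. -/
def IsLeftOnLP (L : LaurentPolynomial ℂ →ₗ[ℂ] ℂ) (f : ℕ → LaurentPolynomial ℂ) : Prop :=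
  IsLeftOLP L f ∧ ∀ n, sesq L (f n) (f n) = 1 ∨ sesq L (f n) (f n) = -1

/-! Multiplication by `z^{±1}` maps `Λ_n^+` into `Λ_{n+2}^+`, so `z^{±1} f_n` is the finite Fourier
sum `Σ_{k ≤ n+2} ((z^{±1} f_n, f_k)/ℓ_k) f_k`. Since `(z^{±1} f_n, f_k) = (f_n, z^{∓1} f_k)` and
`z^{∓1} f_k ∈ Λ_{k+2}^+ = span {f_0, …, f_{k+2}}`, these coefficients vanish for `k + 2 < n`. The
recurrence for `f_{n*}` is the substar of the one for `z⁻¹ f_n`: substar is a conjugate-linear ring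
automorphism, and hermitian symmetry turns the conjugated coefficients into `(ℓ_n/ℓ_k) π_{k,n}`. -/

theorem LinearMap.IsOrthoᵢ.eq_sum_of_mem_span {K V ι : Type*} [Field K] [AddCommGroup V]
    [Module K V] [Fintype ι] {J : K →+* K} {B : V →ₗ[K] V →ₛₗ[J] K} {v : ι → V}
    (hv : B.IsOrthoᵢ v) (hvv : ∀ i, B (v i) (v i) ≠ 0) {g : V}
    (hg : g ∈ Submodule.span K (Set.range v)) :
    g = ∑ i, (B g (v i) / B (v i) (v i)) • v i := by
  obtain ⟨c, rfl⟩ := (Submodule.mem_span_range_iff_exists_fun K).mp hg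
  refine Finset.sum_congr rfl fun j _ => ?_
  have hcoeff : B (∑ i, c i • v i) (v j) = c j * B (v j) (v j) := by
    simp only [B.map_sum₂, LinearMap.map_smul₂, smul_eq_mul]
    exact Finset.sum_eq_single j (fun i _ hij => by rw [hv hij, mul_zero]) (by simp)
  rw [hcoeff, mul_div_cancel_right₀ _ (hvv j)]

-- `substar` unfolds definitionally to this composite.
def substarRingHom : LaurentPolynomial ℂ →+* LaurentPolynomial ℂ :=
  (AddMonoidAlgebra.mapRingHom ℤ (starRingEnd ℂ)).comp invert.toRingHom

lemma substar_add (p q : LaurentPolynomial ℂ) : substar (p + q) = substar p + substar q :=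
  map_add substarRingHom p q

lemma substar_mul (p q : LaurentPolynomial ℂ) : substar (p * q) = substar p * substar q :=
  map_mul substarRingHom p q

lemma substar_sum {ι : Type*} (s : Finset ι) (g : ι → LaurentPolynomial ℂ) :
    substar (∑ i ∈ s, g i) = ∑ i ∈ s, substar (g i) :=
  map_sum substarRingHom g s

lemma substar_C (a : ℂ) : substar (LaurentPolynomial.C a) = LaurentPolynomial.C (conj a) := by
  show AddMonoidAlgebra.mapRingHom ℤ (starRingEnd ℂ) (invert _) = _
  rw [invert_C, ← LaurentPolynomial.single_eq_C,
    AddMonoidAlgebra.mapRingHom_single, LaurentPolynomial.single_eq_C]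

lemma substar_T (n : ℤ) : substar (T n) = T (-n) := by
  show AddMonoidAlgebra.mapRingHom ℤ (starRingEnd ℂ) (invert _) = _
  rw [invert_T, T, AddMonoidAlgebra.mapRingHom_single, map_one]

lemma substar_smul (c : ℂ) (p : LaurentPolynomial ℂ) : substar (c • p) = conj c • substar p := by
  simp only [LaurentPolynomial.smul_eq_C_mul, substar_mul, substar_C]

lemma coeff_substar (p : LaurentPolynomial ℂ) (k : ℤ) :
    (substar p).coeff k = conj (p.coeff (-k)) := by
  simp [substar]

lemma substar_substar (p : LaurentPolynomial ℂ) : substar (substar p) = p :=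
  LaurentPolynomial.ext fun k => by simp [coeff_substar]

section Sesq

variable {L : LaurentPolynomial ℂ →ₗ[ℂ] ℂ}

lemma IsHermitianL.apply_T_neg (hL : IsHermitianL L) (n : ℤ) :
    L (T (-n)) = conj (L (T n)) := by
  obtain ⟨k, rfl | rfl⟩ := n.eq_nat_or_neg
  · exact hL k
  · rw [neg_neg, hL k, conj_conj]

lemma IsHermitianL.apply_substar (hL : IsHermitianL L) (p : LaurentPolynomial ℂ) :
    L (substar p) = conj (L p) := by
  induction p using LaurentPolynomial.induction_on' with
  | add p q hp hq => rw [substar_add, map_add, map_add, hp, hq, map_add]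
  | C_mul_T n a =>
    simp only [← LaurentPolynomial.smul_eq_C_mul, substar_smul, substar_T, map_smul, smul_eq_mul,
      map_mul, hL.apply_T_neg]

def sesqForm (L : LaurentPolynomial ℂ →ₗ[ℂ] ℂ) :
    LaurentPolynomial ℂ →ₗ[ℂ] LaurentPolynomial ℂ →ₗ⋆[ℂ] ℂ :=
  LinearMap.mk₂'ₛₗ (RingHom.id ℂ) (starRingEnd ℂ) (sesq L)
    (fun p p' q => by simp only [sesq, add_mul, map_add])
    (fun c p q => by rw [sesq, sesq, smul_mul_assoc, map_smul, RingHom.id_apply])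
    (fun p q q' => by simp only [sesq, substar_add, mul_add, map_add])
    (fun c p q => by rw [sesq, sesq, substar_smul, mul_smul_comm, map_smul, smul_eq_mul])

lemma IsHermitianL.conj_sesq (hL : IsHermitianL L) (p q : LaurentPolynomial ℂ) :
    conj (sesq L p q) = sesq L q p := by
  rw [sesq, sesq, ← hL.apply_substar, substar_mul, substar_substar, mul_comm]

lemma sesq_T_mul_left (n : ℤ) (p q : LaurentPolynomial ℂ) :
    sesq L (T n * p) q = sesq L p (T (-n) * q) := by
  rw [sesq, sesq, substar_mul, substar_T, neg_neg, mul_assoc, mul_left_comm]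

lemma IsHermitianL.conj_sesq_T_neg_one_mul (hL : IsHermitianL L) (p q : LaurentPolynomial ℂ) :
    conj (sesq L (T (-1) * p) q) = sesq L (T 1 * q) p := by
  rw [hL.conj_sesq, sesq_T_mul_left]

end Sesq

lemma linearIndependent_T : LinearIndependent ℂ (T : ℤ → LaurentPolynomial ℂ) :=
  (AddMonoidAlgebra.basis ℤ ℂ).linearIndependent

lemma lamBox_mono {m n m' n' : ℤ} (hm : m ≤ m') (hn : n' ≤ n) : lamBox m' n' ≤ lamBox m n :=
  Submodule.span_mono (Set.image_mono (Set.Icc_subset_Icc hm hn))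

lemma finrank_lamBox {m n : ℤ} (h : m ≤ n + 1) :
    (Module.finrank ℂ (lamBox m n) : ℤ) = n + 1 - m := by
  have hT : LinearIndependent ℂ fun k : Set.Icc m n => (T k : LaurentPolynomial ℂ) :=
    linearIndependent_T.comp _ Subtype.coe_injective
  rw [lamBox, Set.image_eq_range, finrank_span_eq_card hT, Int.card_fintype_Icc_of_le _ _ h]

lemma map_mulLeft_T_lamBox (a m n : ℤ) :
    (lamBox m n).map (LinearMap.mulLeft ℂ (T a)) = lamBox (m + a) (n + a) := by
  rw [lamBox, lamBox, Submodule.map_span, Set.image_image, ← Set.image_add_const_Icc,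
    Set.image_image]
  simp only [LinearMap.mulLeft_apply, ← T_add, add_comm a]

instance (n : ℕ) : FiniteDimensional ℂ (lamPlus n) :=
  FiniteDimensional.span_of_finite ℂ ((Set.finite_Icc _ _).image _)

lemma finrank_lamPlus (n : ℕ) : Module.finrank ℂ (lamPlus n) = n + 1 := by
  have := finrank_lamBox (m := -((n / 2 : ℕ) : ℤ)) (n := ((n + 1) / 2 : ℕ)) (by omega)
  rw [lamPlus]
  omega

lemma T_mul_mem_lamPlus {n : ℕ} {a : ℤ} (ha : a.natAbs ≤ 1) {g : LaurentPolynomial ℂ}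
    (hg : g ∈ lamPlus n) : T a * g ∈ lamPlus (n + 2) := by
  have h := Submodule.mem_map_of_mem (f := LinearMap.mulLeft ℂ (T a)) hg
  rw [lamPlus, map_mulLeft_T_lamBox] at h
  exact lamBox_mono (by omega) (by omega) h

namespace IsRightOLP

variable {L : LaurentPolynomial ℂ →ₗ[ℂ] ℂ} {f : ℕ → LaurentPolynomial ℂ}

lemma mem_lamPlus (hf : IsRightOLP L f) (n : ℕ) : f n ∈ lamPlus n := hf.1 n

lemma sesq_eq_zero (hf : IsRightOLP L f) {n m : ℕ} (h : n ≠ m) : sesq L (f n) (f m) = 0 :=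
  hf.2.2.2.1 n m h

lemma sesq_self_ne_zero (hf : IsRightOLP L f) (n : ℕ) : sesq L (f n) (f n) ≠ 0 := hf.2.2.2.2 n

lemma isOrthoᵢ_fin (hf : IsRightOLP L f) (N : ℕ) :
    (sesqForm L).IsOrthoᵢ fun i : Fin (N + 1) => f i :=
  fun _ _ hij => hf.sesq_eq_zero (Fin.val_injective.ne hij)

lemma span_eq_lamPlus (hf : IsRightOLP L f) (N : ℕ) :
    Submodule.span ℂ (Set.range fun i : Fin (N + 1) => f i) = lamPlus N := by
  have hle : Submodule.span ℂ (Set.range fun i : Fin (N + 1) => f i) ≤ lamPlus N :=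
    Submodule.span_le.mpr <| Set.range_subset_iff.mpr fun i =>
      lamBox_mono (by omega) (by omega) (hf.mem_lamPlus i)
  refine Submodule.eq_of_le_of_finrank_le hle ?_
  rw [finrank_lamPlus, finrank_span_eq_card
    (LinearMap.linearIndependent_of_isOrthoᵢ (hf.isOrthoᵢ_fin N) fun i => hf.sesq_self_ne_zero i),
    Fintype.card_fin]

lemma eq_sum_range (hf : IsRightOLP L f) {N : ℕ} {g : LaurentPolynomial ℂ} (hg : g ∈ lamPlus N) :
    g = ∑ k ∈ Finset.range (N + 1), (sesq L g (f k) / sesq L (f k) (f k)) • f k := by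
  rw [← span_eq_lamPlus hf] at hg
  rw [← Fin.sum_univ_eq_sum_range (fun k => (sesq L g (f k) / sesq L (f k) (f k)) • f k)]
  exact (hf.isOrthoᵢ_fin N).eq_sum_of_mem_span (fun i => hf.sesq_self_ne_zero i) hg

lemma sesq_eq_zero_of_lt (hf : IsRightOLP L f) {m n : ℕ} (hmn : m < n) {g : LaurentPolynomial ℂ}
    (hg : g ∈ lamPlus m) : sesq L (f n) g = 0 := by
  rw [← span_eq_lamPlus hf] at hg
  refine (Submodule.span_le (p := LinearMap.ker (sesqForm L (f n)))).mpr ?_ hg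
  rintro _ ⟨i, rfl⟩
  exact hf.sesq_eq_zero (by omega)

lemma T_mul_eq_sum_Icc (hf : IsRightOLP L f) {a : ℤ} (ha : a.natAbs ≤ 1) (n : ℕ) :
    T a * f n = ∑ k ∈ Finset.Icc (n - 2) (n + 2),
      (sesq L (T a * f n) (f k) / sesq L (f k) (f k)) • f k := by
  refine (hf.eq_sum_range (T_mul_mem_lamPlus ha (hf.mem_lamPlus n))).trans
    (Finset.sum_subset (fun k hk => ?_) fun k hk' hk => ?_).symm
  · simp only [Finset.mem_Icc, Finset.mem_range] at hk ⊢
    omega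
  · have hkn : k + 2 < n := by
      simp only [Finset.mem_Icc, Finset.mem_range] at hk hk'
      omega
    rw [sesq_T_mul_left,
      hf.sesq_eq_zero_of_lt hkn (T_mul_mem_lamPlus (by omega) (hf.mem_lamPlus k)), zero_div,
      zero_smul]

end IsRightOLP

/-- Proposition 2.4: right orthogonal Laurent polynomials satisfy a
five-term recurrence relation: there are coefficients π_{n,k} (|n-k| ≤ 2) with
z f_n = Σ_{k=n-2}^{n+2} π_{n,k} f_k and
z f_{n*} = Σ_{k=n-2}^{n+2} (ℓ_n/ℓ_k) π_{k,n} f_{k*} (sums over k ≥ 0). -/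
theorem fiveTerm_recurrence
    (L : LaurentPolynomial ℂ →ₗ[ℂ] ℂ) (hL : IsHermitianL L)
    (f : ℕ → LaurentPolynomial ℂ) (hf : IsRightOLP L f) :
    ∃ π : ℕ → ℕ → ℂ,
      ∀ n : ℕ,
        T 1 * f n = ∑ k ∈ Finset.Icc (n - 2) (n + 2), π n k • f k ∧
        T 1 * substar (f n) =
          ∑ k ∈ Finset.Icc (n - 2) (n + 2),
            (sesq L (f n) (f n) / sesq L (f k) (f k) * π k n) • substar (f k) := by
  refine ⟨fun n k => sesq L (T 1 * f n) (f k) / sesq L (f k) (f k), fun n =>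
    ⟨hf.T_mul_eq_sum_Icc (by decide) n, ?_⟩⟩
  have hsubstar : T 1 * substar (f n) = substar (T (-1) * f n) := by
    rw [substar_mul, substar_T, neg_neg]
  rw [hsubstar, hf.T_mul_eq_sum_Icc (by decide) n, substar_sum]
  refine Finset.sum_congr rfl fun k _ => ?_
  rw [substar_smul, map_div₀, hL.conj_sesq_T_neg_one_mul, hL.conj_sesq, div_mul_div_comm,
    mul_comm (sesq L (f n) (f n)), mul_div_mul_right _ _ (hf.sesq_self_ne_zero n)]
end
end

section
/- Let n ≥ 1 and let 0 ≤ R_1 ≤ R_2 be real numbers such that R_1 ≤ |a_j| ≤ R_2 for all 1 ≤ j ≤ n. Set K := max{|1 − R_1²|^{1/2}, |1 − R_2²|^{1/2}}, K_2 := (R_2 + K)², and K_1 := R_1² + R_2² − K_2. Then every zero z ∈ ℂ of φ_n satisfies K_1 ≤ |z| ≤ K_2. -/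
open LaurentPolynomial Polynomial Complex ComplexConjugate

noncomputable section

/-- Reversed polynomial with conjugated coefficients: p*(z) = Σ conj(c_{m-k}) z^k. -/
def revc (p : Polynomial ℂ) : Polynomial ℂ := (p.map (starRingEnd ℂ)).reverse

/-- Monic orthogonal polynomials from Schur parameters: φ_0 = 1,
φ_n = z φ_{n-1} + a_n φ*_{n-1}. -/
def phi (a : ℕ → ℂ) : ℕ → Polynomial ℂ
  | 0 => 1
  | n + 1 => X * phi a n + Polynomial.C (a (n + 1)) * revc (phi a n)

/-- ρ_n := |1 - |a_n|²|^{1/2}. -/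
def rho (a : ℕ → ℂ) (n : ℕ) : ℝ := Real.sqrt |1 - ‖a n‖ ^ 2|

/-- ε_n := sgn (1 - |a_n|²). -/
def sgn (a : ℕ → ℂ) (n : ℕ) : ℝ := Real.sign (1 - ‖a n‖ ^ 2)

/-- ρ̂_n := ε_n ρ_n. -/
def rhoh (a : ℕ → ℂ) (n : ℕ) : ℝ := sgn a n * rho a n

/-- κ_n := Π_{k=1}^n ρ_k⁻¹ (κ_0 = 1). -/
def kap (a : ℕ → ℂ) (n : ℕ) : ℝ := ∏ k ∈ Finset.Icc 1 n, (rho a k)⁻¹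

/-- e_n := Π_{k=1}^n ε_k (e_0 = 1). -/
def esgn (a : ℕ → ℂ) (n : ℕ) : ℝ := ∏ k ∈ Finset.Icc 1 n, sgn a k

/-- Orthonormal polynomials φ̂_n := κ_n φ_n. -/
def phin (a : ℕ → ℂ) (n : ℕ) : Polynomial ℂ := Polynomial.C ((kap a n : ℝ) : ℂ) * phi a n

/-- Standard right orthonormal Laurent polynomials:
χ_{2m} = z^{-m} φ̂*_{2m}, χ_{2m+1} = z^{-m} φ̂_{2m+1}. -/
def chi (a : ℕ → ℂ) (n : ℕ) : LaurentPolynomial ℂ :=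
  T (-((n / 2 : ℕ) : ℤ)) * (if Even n then revc (phin a n) else phin a n).toLaurent

/-- The kernel K_n(z,y) := Σ_{k=0}^n e_k φ̂_k(z) conj(φ̂_k(y)). -/
def Kker (a : ℕ → ℂ) (n : ℕ) (z y : ℂ) : ℂ :=
  ∑ k ∈ Finset.range (n + 1),
    ((esgn a k : ℝ) : ℂ) * (phin a k).eval z * conj ((phin a k).eval y)

/-- Entries of the five-diagonal matrix, with rows/columns indexed from 1. -/
def Fent (a : ℕ → ℂ) (i j : ℕ) : ℂ :=
  if i = 1 then
    if j = 1 then -a 1 else if j = 2 then (rho a 1 : ℂ) else 0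
  else if i % 2 = 0 then
    if j + 1 = i then -(rhoh a (i - 1) : ℂ) * a i
    else if j = i then -conj (a (i - 1)) * a i
    else if j = i + 1 then -(rho a i : ℂ) * a (i + 1)
    else if j = i + 2 then (rho a i : ℂ) * (rho a (i + 1) : ℂ)
    else 0
  else
    if j + 2 = i then (rhoh a (i - 2) : ℂ) * (rhoh a (i - 1) : ℂ)
    else if j + 1 = i then conj (a (i - 2)) * (rhoh a (i - 1) : ℂ)
    else if j = i then -conj (a (i - 1)) * a i
    else if j = i + 1 then conj (a (i - 1)) * (rho a i : ℂ)
    else 0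

/-- The n×n five-diagonal matrix ℱ_n. -/
def Fmat (a : ℕ → ℂ) (n : ℕ) : Matrix (Fin n) (Fin n) ℂ :=
  Matrix.of fun i j => Fent a (i.val + 1) (j.val + 1)

/-- Evaluation of a Laurent polynomial at a nonzero complex number. -/
def levalAt (z : ℂ) (f : LaurentPolynomial ℂ) : ℂ :=
  Finsupp.sum f.coeff fun k c => c * z ^ k

/-!
Put `M = R₂ + K`, so that `K₂ = M²`. In the Szegő recursion `φ_{k+1} = zφ_k + a_{k+1}φ*_k`,
`φ*_{k+1} = ā_{k+1}zφ_k + φ*_k`, the bounds `‖a_j‖ ≤ R₂` and `|1 - ‖a_j‖²| ≤ K²` propagate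
`‖φ*_k(z)‖ ≤ M‖φ_k(z)‖` with `φ_k(z) ≠ 0` when `‖z‖ > M²`, and `‖φ_k(z)‖ ≤ M‖φ*_k(z)‖` with
`φ*_k(z) ≠ 0` when `‖z‖M² < 1`; both start at `φ_0 = φ*_0 = 1` since `M ≥ 1`. The first gives the
upper bound. For `‖z‖ < K₁` one has `‖z‖M² < 1` and `‖z‖M < R₁ ≤ ‖a_n‖`, so the term
`a_nφ*_{n-1}(z)` of `φ_n(z)` dominates `zφ_{n-1}(z)` and `φ_n(z) ≠ 0`.
-/

lemma Polynomial.reflect_succ_X_mul {R : Type*} [Semiring R] {p : R[X]} {N : ℕ}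
    (hp : p.natDegree ≤ N) : (X * p).reflect (N + 1) = p.reflect N := by
  rw [add_comm, reflect_mul X p natDegree_X_le hp, reflect_one_X, one_mul]

lemma natDegree_map_conj (p : ℂ[X]) : (p.map (starRingEnd ℂ)).natDegree = p.natDegree :=
  natDegree_map_eq_of_injective (RingHom.injective _) p

lemma revc_eq_reflect (p : ℂ[X]) : revc p = (p.map (starRingEnd ℂ)).reflect p.natDegree := by
  rw [revc, reverse, natDegree_map_conj]

lemma map_conj_revc (p : ℂ[X]) : (revc p).map (starRingEnd ℂ) = p.reflect p.natDegree := by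
  rw [revc_eq_reflect, ← reflect_map, Polynomial.map_map,
    show (starRingEnd ℂ).comp (starRingEnd ℂ) = RingHom.id ℂ from RingHom.ext conj_conj,
    Polynomial.map_id]

lemma natDegree_revc_le (p : ℂ[X]) : (revc p).natDegree ≤ p.natDegree :=
  (reverse_natDegree_le _).trans (natDegree_map_conj p).le

lemma degree_C_mul_revc_lt {p : ℂ[X]} (hp : p ≠ 0) (c : ℂ) :
    (Polynomial.C c * revc p).degree < (X * p).degree := by
  rw [degree_eq_natDegree (mul_ne_zero X_ne_zero hp), natDegree_X_mul hp]
  exact degree_le_natDegree.trans_lt (WithBot.coe_lt_coe.mpr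
    (Nat.lt_succ_of_le ((natDegree_C_mul_le _ _).trans (natDegree_revc_le p))))

lemma revc_X_mul_add_C_mul_revc {p : ℂ[X]} (hp : p ≠ 0) (c : ℂ) :
    revc (X * p + Polynomial.C c * revc p) = Polynomial.C (conj c) * (X * p) + revc p := by
  have hdeg : (X * p + Polynomial.C c * revc p).natDegree = p.natDegree + 1 := by
    rw [natDegree_add_eq_left_of_degree_lt (degree_C_mul_revc_lt hp c), natDegree_X_mul hp]
  rw [revc_eq_reflect, hdeg, Polynomial.map_add, Polynomial.map_mul, Polynomial.map_mul, map_X,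
    map_C, map_conj_revc, reflect_add, reflect_C_mul,
    reflect_succ_X_mul (natDegree_map_conj p).le, ← revc_eq_reflect,
    ← reflect_succ_X_mul le_rfl, reflect_reflect, add_comm]

section Phi

variable (a : ℕ → ℂ)

lemma monic_phi (n : ℕ) : (phi a n).Monic := by
  induction n with
  | zero => exact monic_one
  | succ n ih => exact (monic_X.mul ih).add_of_left (degree_C_mul_revc_lt ih.ne_zero _)

lemma revc_phi_zero : revc (phi a 0) = 1 := by
  rw [phi, revc, Polynomial.map_one, ← C_1, reverse_C]

lemma revc_phi_succ (n : ℕ) :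
    revc (phi a (n + 1)) = Polynomial.C (conj (a (n + 1))) * (X * phi a n) + revc (phi a n) :=
  revc_X_mul_add_C_mul_revc (monic_phi a n).ne_zero _

lemma eval_phi_succ (w : ℂ) (n : ℕ) :
    (phi a (n + 1)).eval w = w * (phi a n).eval w + a (n + 1) * (revc (phi a n)).eval w := by
  simp [phi]

lemma eval_revc_phi_succ (w : ℂ) (n : ℕ) :
    (revc (phi a (n + 1))).eval w
      = conj (a (n + 1)) * (w * (phi a n).eval w) + (revc (phi a n)).eval w := by
  simp [revc_phi_succ]

end Phi

/-- Both invariants below are this step of the recursion `(A, B) ↦ (A + cB, c̄A + B)`: outside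
with `(A, B) = (zφ_k(z), φ*_k(z))` and `s = ‖z‖⁻¹`, inside with `(A, B) = (φ*_k(z), zφ_k(z))`,
`c̄` in place of `c` and `s = ‖z‖`. -/
lemma norm_conj_mul_add_le_and_ne_zero {c A B : ℂ} {r K s : ℝ} (hs : 0 ≤ s) (hc : ‖c‖ ≤ r)
    (hρ : Real.sqrt |1 - ‖c‖ ^ 2| ≤ K) (hsM : s * (r + K) ^ 2 < 1)
    (hB : ‖B‖ ≤ s * (r + K) * ‖A‖) (hA : A ≠ 0) :
    ‖conj c * A + B‖ ≤ (r + K) * ‖A + c * B‖ ∧ A + c * B ≠ 0 := by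
  obtain ⟨hK, hρ⟩ := Real.sqrt_le_iff.mp hρ
  have hr : 0 ≤ r := (norm_nonneg c).trans hc
  have hA' : ‖A‖ - r * ‖B‖ ≤ ‖A + c * B‖ := by
    calc ‖A‖ - r * ‖B‖ ≤ ‖A‖ - ‖c * B‖ := by
          rw [norm_mul]; gcongr
      _ ≤ ‖A + c * B‖ := norm_sub_le_norm_add _ _
  have hB' : ‖conj c * A + B‖ ≤ r * ‖A + c * B‖ + K ^ 2 * ‖B‖ := by
    have hsplit : conj c * A + B = conj c * (A + c * B) + ((1 - ‖c‖ ^ 2 : ℝ) : ℂ) * B := by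
      push_cast; linear_combination (-B) * Complex.conj_mul' c
    rw [hsplit]
    refine (norm_add_le _ _).trans (add_le_add ?_ ?_) <;>
      rw [norm_mul]
    · rw [Complex.norm_conj]; gcongr
    · rw [Complex.norm_real, Real.norm_eq_abs]; gcongr
  have hAnorm : 0 < ‖A‖ := norm_pos_iff.mpr hA
  -- `‖A + cB‖ ≥ (1 - srM)‖A‖ > sKM‖A‖ ≥ 0`, and `K²sM‖A‖ ≤ K‖A + cB‖` then closes the bound.
  have hlow : s * K * (r + K) * ‖A‖ < ‖A + c * B‖ := by
    nlinarith [mul_le_mul_of_nonneg_left hB hr]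
  refine ⟨?_, fun h0 => ?_⟩
  · nlinarith [mul_le_mul_of_nonneg_left hB (sq_nonneg K), mul_le_mul_of_nonneg_left hlow.le hK]
  · rw [h0, norm_zero] at hlow
    exact hlow.not_ge (by positivity)

section Radii

variable {R₁ R₂ K : ℝ}

lemma one_le_add_of_one_sub_sq_le (hR₂ : 0 ≤ R₂) (hK : 0 ≤ K) (h : 1 - R₂ ^ 2 ≤ K ^ 2) :
    1 ≤ R₂ + K := by
  nlinarith [mul_nonneg hR₂ hK]

lemma sq_add_sq_sub_sq_mul_sq_le_one (hR₁ : 0 ≤ R₁) (hR : R₁ ≤ R₂) (hK : 0 ≤ K)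
    (h₂ : R₂ ^ 2 - 1 ≤ K ^ 2) :
    (R₁ ^ 2 + R₂ ^ 2 - (R₂ + K) ^ 2) * (R₂ + K) ^ 2 ≤ 1 := by
  have hR₂ : 0 ≤ R₂ := hR₁.trans hR
  have hsq : R₁ ^ 2 ≤ R₂ ^ 2 := by nlinarith
  have hB : 0 ≤ 2 * R₂ * K + K ^ 2 := by positivity
  rcases le_or_gt R₂ 1 with h | h
  · have e1 : R₁ ^ 2 ≤ 1 := by nlinarith
    have e2 : R₂ ^ 2 ≤ 1 := by nlinarith
    nlinarith [mul_nonneg (sub_nonneg.mpr e1) (sub_nonneg.mpr e2),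
      mul_nonneg hB (sub_nonneg.mpr hsq)]
  · -- `K₁ M² ≤ R₂⁴ - (2R₂K + K²)²` and `R₂⁴ - 1 ≤ K² (R₂² + 1) ≤ K² (2R₂ + K)²`
    have h4 : R₂ ^ 2 + 1 ≤ (2 * R₂ + K) ^ 2 := by nlinarith
    nlinarith [mul_nonneg hB (sub_nonneg.mpr hsq), mul_le_mul_of_nonneg_right h₂ (by positivity :
      (0 : ℝ) ≤ R₂ ^ 2 + 1), mul_le_mul_of_nonneg_left h4 (sq_nonneg K)]

lemma sq_add_sq_sub_sq_mul_le (hR₁ : 0 ≤ R₁) (hR : R₁ ≤ R₂) (hK : 0 ≤ K)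
    (h₁ : 1 - R₁ ^ 2 ≤ K ^ 2) (h₂ : R₂ ^ 2 - 1 ≤ K ^ 2) :
    (R₁ ^ 2 + R₂ ^ 2 - (R₂ + K) ^ 2) * (R₂ + K) ≤ R₁ := by
  have hM : 0 < R₂ + K :=
    zero_lt_one.trans_le (one_le_add_of_one_sub_sq_le (hR₁.trans hR) hK (by nlinarith))
  rcases le_or_gt (R₁ ^ 2 + R₂ ^ 2 - (R₂ + K) ^ 2) 0 with hK₁ | hK₁
  · nlinarith
  · have hKR₁ : K ≤ R₁ := by nlinarith [mul_nonneg (hR₁.trans hR) hK]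
    have hRM : 1 ≤ R₁ * (R₂ + K) := by
      nlinarith [mul_nonneg hK (sub_nonneg.mpr hKR₁), mul_nonneg hR₁ (sub_nonneg.mpr hR)]
    nlinarith [sq_add_sq_sub_sq_mul_sq_le_one hR₁ hR hK h₂]

end Radii

lemma sqrt_abs_one_sub_sq_le_max {x R₁ R₂ : ℝ} (hR₁ : 0 ≤ R₁) (h₁ : R₁ ≤ x) (h₂ : x ≤ R₂) :
    Real.sqrt |1 - x ^ 2| ≤ max (Real.sqrt |1 - R₁ ^ 2|) (Real.sqrt |1 - R₂ ^ 2|) := by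
  rw [← Monotone.map_max fun _ _ h => Real.sqrt_le_sqrt h, max_comm]
  exact Real.sqrt_le_sqrt (abs_le_max_abs_abs (by nlinarith) (by nlinarith))

section Invariants

variable {a : ℕ → ℂ} {n : ℕ} {r K : ℝ} {w : ℂ}

lemma norm_eval_revc_phi_le_of_sq_lt_norm (hM : 1 ≤ r + K)
    (ha : ∀ j, 1 ≤ j → j ≤ n → ‖a j‖ ≤ r) (hρ : ∀ j, 1 ≤ j → j ≤ n → rho a j ≤ K)
    (hw : (r + K) ^ 2 < ‖w‖) :
    ∀ k ≤ n, ‖(revc (phi a k)).eval w‖ ≤ (r + K) * ‖(phi a k).eval w‖ ∧ (phi a k).eval w ≠ 0 := by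
  have hw₀ : 0 < ‖w‖ := (sq_nonneg _).trans_lt hw
  intro k hk
  induction k with
  | zero =>
    rw [revc_phi_zero]
    simpa [phi] using hM
  | succ k ih =>
    obtain ⟨hv, hu⟩ := ih (by omega)
    rw [eval_phi_succ, eval_revc_phi_succ]
    refine norm_conj_mul_add_le_and_ne_zero (s := ‖w‖⁻¹) (by positivity) (ha _ (by omega) hk)
      (hρ _ (by omega) hk) ?_ ?_ (mul_ne_zero (norm_pos_iff.mp hw₀) hu)
    · rwa [inv_mul_lt_iff₀ hw₀, mul_one]
    · exact hv.trans_eq (by rw [norm_mul]; field_simp)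

lemma norm_eval_phi_le_of_norm_mul_sq_lt_one (hM : 1 ≤ r + K)
    (ha : ∀ j, 1 ≤ j → j ≤ n → ‖a j‖ ≤ r) (hρ : ∀ j, 1 ≤ j → j ≤ n → rho a j ≤ K)
    (hw : ‖w‖ * (r + K) ^ 2 < 1) :
    ∀ k ≤ n, ‖(phi a k).eval w‖ ≤ (r + K) * ‖(revc (phi a k)).eval w‖ ∧
      (revc (phi a k)).eval w ≠ 0 := by
  intro k hk
  induction k with
  | zero =>
    rw [revc_phi_zero]
    simpa [phi] using hM
  | succ k ih =>
    obtain ⟨hu, hv⟩ := ih (by omega)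
    have step := norm_conj_mul_add_le_and_ne_zero (c := conj (a (k + 1))) (B := w * _)
      (norm_nonneg w) (by rw [Complex.norm_conj]; exact ha _ (by omega) hk)
      (by rw [Complex.norm_conj]; exact hρ _ (by omega) hk) hw
      (by rw [norm_mul, mul_assoc]; gcongr) hv
    rw [conj_conj, add_comm, add_comm (_ : ℂ) (conj _ * _)] at step
    rwa [eval_phi_succ, eval_revc_phi_succ]

lemma eval_phi_ne_zero_of_norm_mul_lt {R : ℝ} (hM : 1 ≤ r + K)
    (ha : ∀ j, 1 ≤ j → j ≤ n → R ≤ ‖a j‖ ∧ ‖a j‖ ≤ r) (hρ : ∀ j, 1 ≤ j → j ≤ n → rho a j ≤ K)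
    (hw : ‖w‖ * (r + K) ^ 2 < 1) (hwR : ‖w‖ * (r + K) < R) :
    (phi a n).eval w ≠ 0 := by
  cases n with
  | zero => simp [phi]
  | succ n =>
    obtain ⟨hu, hv⟩ := norm_eval_phi_le_of_norm_mul_sq_lt_one hM (fun j h₁ h₂ => (ha j h₁ h₂).2)
      hρ hw n (by omega)
    have hR := (ha (n + 1) (by omega) le_rfl).1
    rw [eval_phi_succ]
    intro h0
    -- `‖a_{n+1}‖ ‖φ*_n(w)‖ = ‖w‖ ‖φ_n(w)‖ ≤ ‖w‖ (r + K) ‖φ*_n(w)‖ < R ‖φ*_n(w)‖`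
    have heq : ‖a (n + 1)‖ * ‖(revc (phi a n)).eval w‖ = ‖w‖ * ‖(phi a n).eval w‖ := by
      rw [← norm_mul, ← norm_mul, eq_neg_of_add_eq_zero_right h0, norm_neg]
    nlinarith [mul_le_mul_of_nonneg_left hu (norm_nonneg w), norm_pos_iff.mpr hv]

end Invariants

theorem zeros_bounds_general (a : ℕ → ℂ)
    (n : ℕ) (R₁ R₂ : ℝ) (hR₁ : 0 ≤ R₁) (hR : R₁ ≤ R₂)
    (hbound : ∀ j, 1 ≤ j → j ≤ n → R₁ ≤ ‖a j‖ ∧ ‖a j‖ ≤ R₂) :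
    ∀ z : ℂ, (phi a n).eval z = 0 →
      R₁ ^ 2 + R₂ ^ 2 - (R₂ + max (Real.sqrt |1 - R₁ ^ 2|) (Real.sqrt |1 - R₂ ^ 2|)) ^ 2
          ≤ ‖z‖ ∧
      ‖z‖
          ≤ (R₂ + max (Real.sqrt |1 - R₁ ^ 2|) (Real.sqrt |1 - R₂ ^ 2|)) ^ 2 := by
  intro z hz
  set K := max (Real.sqrt |1 - R₁ ^ 2|) (Real.sqrt |1 - R₂ ^ 2|)
  obtain ⟨hK, habs₁⟩ := Real.sqrt_le_iff.mp (le_max_left _ _ : Real.sqrt |1 - R₁ ^ 2| ≤ K)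
  have habs₂ := (Real.sqrt_le_iff.mp (le_max_right _ _ : Real.sqrt |1 - R₂ ^ 2| ≤ K)).2
  have h₁ : 1 - R₁ ^ 2 ≤ K ^ 2 := (le_abs_self _).trans habs₁
  have h₂ : R₂ ^ 2 - 1 ≤ K ^ 2 := (le_abs_self _).trans ((abs_sub_comm _ _).trans_le habs₂)
  have hM := one_le_add_of_one_sub_sq_le (hR₁.trans hR) hK ((le_abs_self _).trans habs₂)
  have hρ : ∀ j, 1 ≤ j → j ≤ n → rho a j ≤ K := fun j hj₁ hj₂ =>
    sqrt_abs_one_sub_sq_le_max hR₁ (hbound j hj₁ hj₂).1 (hbound j hj₁ hj₂).2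
  constructor
  · by_contra! hz₁
    have hMpos : 0 < R₂ + K := zero_lt_one.trans_le hM
    refine eval_phi_ne_zero_of_norm_mul_lt hM hbound hρ ?_ ?_ hz
    · exact (mul_lt_mul_of_pos_right hz₁ (by positivity)).trans_le
        (sq_add_sq_sub_sq_mul_sq_le_one hR₁ hR hK h₂)
    · exact (mul_lt_mul_of_pos_right hz₁ hMpos).trans_le
        (sq_add_sq_sub_sq_mul_le hR₁ hR hK h₁ h₂)
  · by_contra! hz₂
    exact (norm_eval_revc_phi_le_of_sq_lt_norm hM (fun j hj₁ hj₂ => (hbound j hj₁ hj₂).2) hρ hz₂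
      n le_rfl).2 hz

/-- Theorem 4.1: if R₁ ≤ |a_j| ≤ R₂ for 1 ≤ j ≤ n, then with
K := max{|1−R₁²|^{1/2}, |1−R₂²|^{1/2}}, K₂ := (R₂+K)², K₁ := R₁²+R₂²−K₂,
every zero z of φ_n satisfies K₁ ≤ |z| ≤ K₂. -/
theorem zeros_bounds (a : ℕ → ℂ) (ha : ∀ n, 1 ≤ n → ‖a n‖ ≠ 1)
    (n : ℕ) (hn : 1 ≤ n) (R₁ R₂ : ℝ) (hR₁ : 0 ≤ R₁) (hR : R₁ ≤ R₂)
    (hbound : ∀ j, 1 ≤ j → j ≤ n → R₁ ≤ ‖a j‖ ∧ ‖a j‖ ≤ R₂) :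
    ∀ z : ℂ, (phi a n).eval z = 0 →
      R₁ ^ 2 + R₂ ^ 2 - (R₂ + max (Real.sqrt |1 - R₁ ^ 2|) (Real.sqrt |1 - R₂ ^ 2|)) ^ 2
          ≤ ‖z‖ ∧
      ‖z‖
          ≤ (R₂ + max (Real.sqrt |1 - R₁ ^ 2|) (Real.sqrt |1 - R₂ ^ 2|)) ^ 2 :=
  zeros_bounds_general a n R₁ R₂ hR₁ hR hbound
end
end
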